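/- Let G(2,5) ⊂ ℙ(Λ²ℂ⁵) = ℙ⁹ be the Grassmannian of 2-planes in ℂ⁵ under the Plücker embedding (the locus of decomposable bivectors). Let ℓ = {[e₁∧(t e₂ + s e₃)] : [t:s] ∈ ℙ¹} and let b ∈ G(2,5) be a point not lying on any line of G(2,5) that meets ℓ. Then the linear span of {b} ∪ ℓ in ℙ⁹ intersects G(2,5) exactly in {b} ∪ ℓ. -/

import Mathlib

noncomputable section

abbrev V5 : Type := Fin 5 → ℂ

/-- The exterior algebra of `ℂ⁵`; bivectors `Λ²ℂ⁵` live inside it. -/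
abbrev ΛV : Type := ExteriorAlgebra ℂ V5

/-- The standard basis `e₁, …, e₅` of `ℂ⁵` (indexed by `0, …, 4`). -/
def e (i : Fin 5) : V5 := Pi.single i 1

/-- The wedge product `u ∧ v` of two vectors, as an element of the exterior algebra. -/
def wedge (u v : V5) : ΛV := ExteriorAlgebra.ι ℂ u * ExteriorAlgebra.ι ℂ v

/-- The Plücker-embedded Grassmannian `G(2,5) ⊆ ℙ⁹ = ℙ(Λ²ℂ⁵)`:
classes of nonzero decomposable bivectors. -/
def G25 : Set (Projectivization ℂ ΛV) :=
  {P | ∃ u v : V5, ∃ h : wedge u v ≠ 0, P = Projectivization.mk ℂ (wedge u v) h}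

/-- The projective linear subspace associated to a linear subspace. -/
def projSet (W : Submodule ℂ ΛV) : Set (Projectivization ℂ ΛV) :=
  {P | P.rep ∈ W}

/-- The line `ℓ = {[e₁ ∧ (t e₂ + s e₃)] : [t:s] ∈ ℙ¹} ⊆ G(2,5)`. -/
def lineL : Set (Projectivization ℂ ΛV) :=
  {P | ∃ t s : ℂ, ∃ h : wedge (e 0) (t • e 1 + s • e 2) ≠ 0,
    P = Projectivization.mk ℂ (wedge (e 0) (t • e 1 + s • e 2)) h}

/-- The hyperplane `{x₄₅ = 0}` of `Λ²ℂ⁵`: the span of all basis bivectors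
`eᵢ ∧ eⱼ` other than `±e₄ ∧ e₅`.  A bivector has vanishing Plücker coordinate
`x₄₅` iff it lies in this subspace. -/
def W45 : Submodule ℂ ΛV :=
  Submodule.span ℂ
    {z | ∃ i j : Fin 5, ¬(i = 3 ∧ j = 4) ∧ ¬(i = 4 ∧ j = 3) ∧ z = wedge (e i) (e j)}

/-! Write `b = [u ∧ v]`. If the planes `⟨u, v⟩` and `⟨e₁, e₂, e₃⟩` shared a nonzero vector `w`,
then `b = [w ∧ z]` and some `[w ∧ q]` lies on `ℓ`; as `b ∉ ℓ` (`ℓ` itself being a line of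
`G(2,5)`), the pencil `[w ∧ (s z + t q)]` would be a line of `G(2,5)` through `b` meeting `ℓ`.
Hence `u, v, e₁, e₂, e₃` are independent. A point of the
span is `[a u∧v + e₁∧x]` with `x ∈ ⟨e₂, e₃⟩`. A decomposable bivector squares to zero, and this
square is `2a u∧v∧e₁∧x`, which by the independence vanishes only if `a = 0` or `x = 0`. -/

open ExteriorAlgebra Submodule
open scoped LinearAlgebra.Projectivization

theorem ExteriorAlgebra.ιMulti_ne_zero_iff {K E : Type*} [Field K] [AddCommGroup E] [Module K E]
    {n : ℕ} {v : Fin n → E} : ιMulti K n v ≠ 0 ↔ LinearIndependent K v := by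
  refine ⟨fun h => by_contra fun hv => h ((ιMulti K n).map_linearDependent v hv), fun hv => ?_⟩
  let s : Set.powersetCard (Fin n) n := ⟨Finset.univ, by simp⟩
  have hs := (exteriorPower.ιMulti_family_linearIndependent_field (n := n) hv).ne_zero s
  have hid : (Set.powersetCard.ofFinEmbEquiv.symm s : Fin n → Fin n) = id :=
    (Finset.orderEmbOfFin_unique s.prop (f := id) (by simp [s]) strictMono_id).symm
  intro h
  apply hs
  ext1
  simp [exteriorPower.ιMulti_family, hid, h]

theorem wedge_eq_ιMulti (u v : V5) : wedge u v = ιMulti ℂ 2 ![u, v] := by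
  simp [wedge, ιMulti_apply]

theorem wedge_ne_zero_iff {u v : V5} : wedge u v ≠ 0 ↔ LinearIndependent ℂ ![u, v] := by
  rw [wedge_eq_ιMulti, ιMulti_ne_zero_iff]

@[simp]
theorem wedge_add_right (u x y : V5) : wedge u (x + y) = wedge u x + wedge u y := by
  simp [wedge, mul_add]

@[simp]
theorem wedge_smul_right (u : V5) (a : ℂ) (x : V5) : wedge u (a • x) = a • wedge u x := by
  simp [wedge]

@[simp]
theorem wedge_add_left (x y u : V5) : wedge (x + y) u = wedge x u + wedge y u := by
  simp [wedge, add_mul]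

@[simp]
theorem wedge_smul_left (a : ℂ) (x u : V5) : wedge (a • x) u = a • wedge x u := by
  simp [wedge]

@[simp]
theorem wedge_neg_right (u x : V5) : wedge u (-x) = -wedge u x := by
  simp [wedge]

@[simp]
theorem wedge_self (u : V5) : wedge u u = 0 := ι_sq_zero u

theorem wedge_swap (u v : V5) : wedge v u = -wedge u v :=
  eq_neg_of_add_eq_zero_left (ι_add_mul_swap v u)

theorem wedge_mul_wedge_self_left (x y z : V5) : wedge x y * wedge x z = 0 := by
  simp only [wedge]
  rw [mul_assoc, ← mul_assoc (ι ℂ y), ← wedge, wedge_swap, wedge, neg_mul, mul_neg,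
    ← mul_assoc, ← mul_assoc, ι_sq_zero, zero_mul, zero_mul, neg_zero]

theorem commute_ι_wedge (a z w : V5) : Commute (ι ℂ a) (wedge z w) := by
  have hswap (x y : V5) : ι ℂ x * ι ℂ y = -(ι ℂ y * ι ℂ x) := wedge_swap y x
  simp only [Commute, SemiconjBy, wedge]
  rw [← mul_assoc, hswap a z, neg_mul, mul_assoc, hswap a w, mul_neg, neg_neg, mul_assoc]

theorem commute_wedge (x y z w : V5) : Commute (wedge x y) (wedge z w) :=
  (commute_ι_wedge x z w).mul_left (commute_ι_wedge y z w)

namespace Projectivization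

variable {K V : Type*} [Field K] [AddCommGroup V] [Module K V]

theorem exists_rep_mk_eq_smul (v : V) (hv : v ≠ 0) : ∃ a : K, (mk K v hv).rep = a • v :=
  let ⟨a, ha⟩ := exists_smul_eq_mk_rep K v hv
  ⟨a, ha.symm⟩

theorem eq_mk_of_rep_eq {P : ℙ K V} {v : V} (h : P.rep = v) :
    P = mk K v (h ▸ P.rep_nonzero) := by
  subst h
  exact (mk_rep P).symm

theorem eq_of_rep_eq_smul {P Q : ℙ K V} {a : K} (h : P.rep = a • Q.rep) : P = Q := by
  rw [← mk_rep P, ← mk_rep Q, mk_eq_mk_iff']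
  exact ⟨a, h.symm⟩

theorem rep_mk_mem_iff {W : Submodule K V} {v : V} (hv : v ≠ 0) :
    (mk K v hv).rep ∈ W ↔ v ∈ W := by
  obtain ⟨a, ha⟩ := exists_smul_eq_mk_rep K v hv
  rw [← ha, Submodule.smul_mem_iff']

end Projectivization

open Projectivization

theorem mem_G25_iff {P : ℙ ℂ ΛV} : P ∈ G25 ↔ ∃ u v : V5, P.rep = wedge u v := by
  constructor
  · rintro ⟨u, v, huv, rfl⟩
    obtain ⟨a, ha⟩ := exists_rep_mk_eq_smul (K := ℂ) _ huv
    exact ⟨u, a • v, by rw [ha, wedge_smul_right]⟩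
  · rintro ⟨u, v, h⟩
    exact ⟨u, v, _, eq_mk_of_rep_eq h⟩

theorem mem_lineL_iff {P : ℙ ℂ ΛV} :
    P ∈ lineL ↔ ∃ t s : ℂ, P.rep = wedge (e 0) (t • e 1 + s • e 2) := by
  constructor
  · rintro ⟨t, s, hts, rfl⟩
    obtain ⟨a, ha⟩ := exists_rep_mk_eq_smul (K := ℂ) _ hts
    exact ⟨a * t, a * s, by rw [ha]; simp [smul_smul]⟩
  · rintro ⟨t, s, h⟩
    exact ⟨t, s, _, eq_mk_of_rep_eq h⟩

theorem lineL_subset_G25 : lineL ⊆ G25 := fun _ hP =>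
  let ⟨_, _, h⟩ := mem_lineL_iff.mp hP
  mem_G25_iff.mpr ⟨_, _, h⟩

theorem wedge_e0_ne_zero {t s : ℂ} (hts : ¬(t = 0 ∧ s = 0)) :
    wedge (e 0) (t • e 1 + s • e 2) ≠ 0 := by
  rw [wedge_ne_zero_iff, LinearIndependent.pair_iff]
  intro c d h
  have h0 := congrFun h 0
  have h1 := congrFun h 1
  have h2 := congrFun h 2
  simp [e] at h0 h1 h2
  grind

theorem wedge_e0_mem_span (t s : ℂ) :
    wedge (e 0) (t • e 1 + s • e 2) ∈ span ℂ {wedge (e 0) (e 1), wedge (e 0) (e 2)} :=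
  mem_span_pair.mpr ⟨t, s, by simp⟩

theorem projSet_span_wedge_pair_subset_G25 (w p q : V5) :
    projSet (span ℂ {wedge w p, wedge w q}) ⊆ G25 := fun P hP =>
  let ⟨m, n, h⟩ := mem_span_pair.mp hP
  mem_G25_iff.mpr ⟨w, m • p + n • q, by simp [← h]⟩

def LiesOnLineMeetingL (b : ℙ ℂ ΛV) : Prop :=
  ∃ W : Submodule ℂ ΛV, Module.finrank ℂ W = 2 ∧
    projSet W ⊆ G25 ∧ b ∈ projSet W ∧ (projSet W ∩ lineL).Nonempty

theorem liesOnLineMeetingL_of_mem_span {w p q : V5}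
    (hli : LinearIndependent ℂ ![wedge w p, wedge w q]) {b Q : ℙ ℂ ΛV}
    (hb : b.rep ∈ span ℂ {wedge w p, wedge w q}) (hQ : Q ∈ lineL)
    (hQW : Q.rep ∈ span ℂ {wedge w p, wedge w q}) : LiesOnLineMeetingL b := by
  refine ⟨_, ?_, projSet_span_wedge_pair_subset_G25 w p q, hb, Q, hQW, hQ⟩
  rw [← Matrix.range_cons_cons_empty, finrank_span_eq_card hli, Fintype.card_fin]

theorem notMem_lineL_of_not_liesOnLineMeetingL {b : ℙ ℂ ΛV} (hnl : ¬LiesOnLineMeetingL b) :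
    b ∉ lineL := by
  intro hbl
  obtain ⟨t, s, hts⟩ := mem_lineL_iff.mp hbl
  have hli : LinearIndependent ℂ ![wedge (e 0) (e 1), wedge (e 0) (e 2)] := by
    refine LinearIndependent.pair_iff.mpr fun m n h => ?_
    by_contra hmn
    exact wedge_e0_ne_zero hmn (by simpa using h)
  have hQ : wedge (e 0) ((1 : ℂ) • e 1 + (0 : ℂ) • e 2) ≠ 0 := wedge_e0_ne_zero (by simp)
  exact hnl <| liesOnLineMeetingL_of_mem_span hli (hts ▸ wedge_e0_mem_span t s)
    ⟨1, 0, hQ, rfl⟩ ((rep_mk_mem_iff hQ).mpr (wedge_e0_mem_span 1 0))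

theorem exists_wedge_eq_of_mem_span {u v w : V5} (hw : w ∈ span ℂ {u, v}) (hw0 : w ≠ 0) :
    ∃ z, wedge u v = wedge w z := by
  obtain ⟨α, β, rfl⟩ := mem_span_pair.mp hw
  by_cases hα : α = 0
  · have hβ : β ≠ 0 := by rintro rfl; simp [hα] at hw0
    refine ⟨-β⁻¹ • u, ?_⟩
    simp [hα, hβ, wedge_swap u v]
  · refine ⟨α⁻¹ • v, ?_⟩
    simp [hα]

theorem exists_wedge_eq_wedge_e0 {w : V5} (hw : w ∈ span ℂ {e 0, e 1, e 2}) (hw0 : w ≠ 0) :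
    ∃ (q : V5) (t s : ℂ), ¬(t = 0 ∧ s = 0) ∧
      wedge w q = wedge (e 0) (t • e 1 + s • e 2) := by
  obtain ⟨α, y, hy, rfl⟩ := mem_span_insert.mp hw
  obtain ⟨β, γ, rfl⟩ := mem_span_pair.mp hy
  by_cases hβγ : β = 0 ∧ γ = 0
  · obtain ⟨rfl, rfl⟩ := hβγ
    refine ⟨e 1, α, 0, fun h => hw0 (by simp [h.1]), by simp⟩
  · refine ⟨-e 0, β, γ, hβγ, ?_⟩
    simp [wedge_swap (e 0)]

theorem disjoint_span_of_not_liesOnLineMeetingL {b : ℙ ℂ ΛV} {u v : V5}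
    (hb : b.rep = wedge u v) (hnl : ¬LiesOnLineMeetingL b) :
    Disjoint (span ℂ {u, v}) (span ℂ {e 0, e 1, e 2}) := by
  rw [Submodule.disjoint_def]
  intro w hwuv hwe
  by_contra hw0
  obtain ⟨z, hz⟩ := exists_wedge_eq_of_mem_span hwuv hw0
  obtain ⟨q, t, s, hts, hq⟩ := exists_wedge_eq_wedge_e0 hwe hw0
  have hQ := wedge_e0_ne_zero hts
  have hli : LinearIndependent ℂ ![wedge w z, wedge w q] := by
    rw [LinearIndependent.pair_iff' (hz ▸ hb ▸ b.rep_nonzero)]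
    intro a ha
    have ha0 : a ≠ 0 := by rintro rfl; exact hQ (by rw [← hq, ← ha, zero_smul])
    refine notMem_lineL_of_not_liesOnLineMeetingL hnl
      (mem_lineL_iff.mpr ⟨a⁻¹ * t, a⁻¹ * s, ?_⟩)
    rw [hb, hz, ← inv_smul_smul₀ ha0 (wedge w z), ha, hq]
    simp [smul_smul]
  exact hnl <| liesOnLineMeetingL_of_mem_span hli (hb ▸ hz ▸ subset_span (by simp))
    ⟨t, s, hQ, rfl⟩ ((rep_mk_mem_iff hQ).mpr (hq ▸ subset_span (by simp)))

theorem linearIndependent_of_not_liesOnLineMeetingL {b : ℙ ℂ ΛV} {u v : V5}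
    (hb : b.rep = wedge u v) (hnl : ¬LiesOnLineMeetingL b) :
    LinearIndependent ℂ ![u, v, e 0, e 1, e 2] := by
  have huv : LinearIndependent ℂ ![u, v] := wedge_ne_zero_iff.mp (hb ▸ b.rep_nonzero)
  have he : LinearIndependent ℂ ![e 0, e 1, e 2] := by
    have : ![e 0, e 1, e 2] = Pi.basisFun ℂ (Fin 5) ∘ ![0, 1, 2] := by
      funext i; fin_cases i <;> simp [e]
    rw [this]
    exact (Pi.basisFun ℂ (Fin 5)).linearIndependent.comp _ (by decide)
  have hsum := (linearIndependent_sum (v := Sum.elim ![u, v] ![e 0, e 1, e 2])).mpr ⟨huv, he, by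
    rw [Sum.elim_comp_inl, Sum.elim_comp_inr, Matrix.range_cons_cons_empty, Matrix.range_cons,
      Matrix.range_cons_cons_empty, Set.singleton_union]
    exact disjoint_span_of_not_liesOnLineMeetingL hb hnl⟩
  have : Sum.elim ![u, v] ![e 0, e 1, e 2] ∘ finSumFinEquiv.symm = ![u, v, e 0, e 1, e 2] := by
    funext i; fin_cases i <;> rfl
  exact (linearIndependent_equiv' finSumFinEquiv.symm this).mpr hsum

theorem wedge_mul_wedge_e0_mul_ι {u v : V5} (m n : ℂ) :
    wedge u v * wedge (e 0) (m • e 1 + n • e 2) * ι ℂ (e 2) =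
        m • ιMulti ℂ 5 ![u, v, e 0, e 1, e 2] ∧
      wedge u v * wedge (e 0) (m • e 1 + n • e 2) * ι ℂ (e 1) =
        -(n • ιMulti ℂ 5 ![u, v, e 0, e 1, e 2]) := by
  have hT : ιMulti ℂ 5 ![u, v, e 0, e 1, e 2] =
      wedge u v * wedge (e 0) (e 1) * ι ℂ (e 2) := by
    simp [ιMulti_apply, wedge, mul_assoc]
  have hswap : ι ℂ (e 2) * ι ℂ (e 1) = -(ι ℂ (e 1) * ι ℂ (e 2)) :=
    wedge_swap (e 1) (e 2)
  simp only [hT, wedge_add_right, wedge_smul_right, mul_add, add_mul, mul_smul_comm,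
    smul_mul_assoc]
  simp [wedge, mul_assoc, hswap]

theorem eq_zero_or_of_smul_wedge_add_wedge_e0_eq_wedge {u v : V5}
    (h5 : LinearIndependent ℂ ![u, v, e 0, e 1, e 2]) {a m n : ℂ} {x y : V5}
    (h : a • wedge u v + wedge (e 0) (m • e 1 + n • e 2) = wedge x y) :
    a = 0 ∨ (m = 0 ∧ n = 0) := by
  have hT : ιMulti ℂ 5 ![u, v, e 0, e 1, e 2] ≠ 0 := ιMulti_ne_zero_iff.mpr h5
  obtain ⟨h2, h1⟩ := wedge_mul_wedge_e0_mul_ι (u := u) (v := v) m n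
  set X := wedge u v
  set Y := wedge (e 0) (m • e 1 + n • e 2)
  have hXY : (2 * a) • (X * Y) = 0 := by
    have hsq : (a • X + Y) * (a • X + Y) = 0 := by rw [h]; exact wedge_mul_wedge_self_left x y y
    rwa [add_mul, mul_add, mul_add, ← ((commute_wedge u v _ _).smul_left a).eq, smul_mul_smul,
      wedge_mul_wedge_self_left, wedge_mul_wedge_self_left, smul_zero, zero_add, add_zero,
      ← two_smul ℂ, smul_mul_assoc, smul_smul] at hsq
  have ham : (2 * a) • m = 0 := by
    have := congrArg (· * ι ℂ (e 2)) hXY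
    simp only [smul_mul_assoc, h2, smul_smul, zero_mul] at this
    exact (smul_eq_zero.mp this).resolve_right hT
  have han : (2 * a) • n = 0 := by
    have := congrArg (· * ι ℂ (e 1)) hXY
    simp only [smul_mul_assoc, h1, smul_neg, smul_smul, zero_mul, neg_eq_zero] at this
    exact (smul_eq_zero.mp this).resolve_right hT
  simp only [smul_eq_mul, mul_eq_zero, two_ne_zero, false_or] at ham han
  tauto

theorem span_rep_lineL_le :
    span ℂ (Projectivization.rep '' lineL) ≤
      span ℂ {wedge (e 0) (e 1), wedge (e 0) (e 2)} := by
  rw [span_le]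
  rintro _ ⟨P, hP, rfl⟩
  obtain ⟨t, s, h⟩ := mem_lineL_iff.mp hP
  exact h ▸ wedge_e0_mem_span t s

/-- if `b ∈ G(2,5)` does not lie on any line contained in `G(2,5)`
that meets `ℓ = {[e₁ ∧ (t e₂ + s e₃)]}`, then the linear span of `{b} ∪ ℓ` in `ℙ⁹`
intersects `G(2,5)` exactly in `{b} ∪ ℓ`. -/
theorem stmt5 (b : Projectivization ℂ ΛV) (hb : b ∈ G25)
    (hnoline : ¬ ∃ W : Submodule ℂ ΛV, Module.finrank ℂ W = 2 ∧
      projSet W ⊆ G25 ∧ b ∈ projSet W ∧ (projSet W ∩ lineL).Nonempty) :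
    G25 ∩ projSet (Submodule.span ℂ (Projectivization.rep '' insert b lineL)) =
      insert b lineL := by
  obtain ⟨u, v, hbuv⟩ := mem_G25_iff.mp hb
  have h5 := linearIndependent_of_not_liesOnLineMeetingL hbuv hnoline
  refine Set.Subset.antisymm ?_ fun P hP => ?_
  · rintro P ⟨hPG, hPspan⟩
    obtain ⟨x, y, hPxy⟩ := mem_G25_iff.mp hPG
    rw [projSet, Set.mem_ofPred_eq, Set.image_insert_eq, mem_span_insert] at hPspan
    obtain ⟨a, z, hz, hPz⟩ := hPspan
    obtain ⟨m, n, rfl⟩ := mem_span_pair.mp (span_rep_lineL_le hz)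
    have hP : P.rep = a • wedge u v + wedge (e 0) (m • e 1 + n • e 2) := by
      simp [hPz, hbuv]
    rcases eq_zero_or_of_smul_wedge_add_wedge_e0_eq_wedge h5 (hP ▸ hPxy) with rfl | ⟨rfl, rfl⟩
    · exact Or.inr (mem_lineL_iff.mpr ⟨m, n, by simpa using hP⟩)
    · exact Or.inl (eq_of_rep_eq_smul (a := a) (by rw [hP, hbuv]; simp [wedge]))
  · refine ⟨?_, subset_span ⟨P, hP, rfl⟩⟩
    rcases hP with rfl | hP
    exacts [hb, lineL_subset_G25 hP]
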